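/- Let Σ* be a symmetric positive definite d×d real matrix and Σ1, Σ2 symmetric positive semidefinite d×d real matrices such that Σ*^{1/2}Σ1^{1/2} = Σ1^{1/2}Σ*^{1/2} and Σ*^{1/2}Σ2^{1/2} = Σ2^{1/2}Σ*^{1/2}. Then for j = 1, 2, S(Σ*,Σj) = Σj^{1/2}Σ*^{-1/2}, so that φ_{μ*}(N(mj,Σj)) = (mj − Σj^{1/2}Σ*^{-1/2}m*, Σj^{1/2}Σ*^{-1/2} − I_d); moreover ‖φ_{μ*}(N(m1,Σ1)) − φ_{μ*}(N(m2,Σ2))‖²_{(m*,Σ*)} = ‖m1 − m2‖² + tr((Σ1^{1/2} − Σ2^{1/2})²). -/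

import Mathlib

open MeasureTheory Matrix Filter ProbabilityTheory

open Classical in
/-- The unique symmetric positive semidefinite square root of a positive semidefinite real
matrix (junk value `0` if the matrix is not positive semidefinite). -/
noncomputable def matSqrt {d : ℕ} (A : Matrix (Fin d) (Fin d) ℝ) : Matrix (Fin d) (Fin d) ℝ :=
  if h : A.PosSemidef then
    (h.1.eigenvectorUnitary : Matrix (Fin d) (Fin d) ℝ) *
      diagonal ((↑) ∘ (√·) ∘ h.1.eigenvalues) *
      (star h.1.eigenvectorUnitary : Matrix (Fin d) (Fin d) ℝ)
  else 0

/-- `S(Σ₁, Σ₂) = Σ₁^{-1/2} (Σ₁^{1/2} Σ₂ Σ₁^{1/2})^{1/2} Σ₁^{-1/2}`. -/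
noncomputable def Smat {d : ℕ} (S1 S2 : Matrix (Fin d) (Fin d) ℝ) : Matrix (Fin d) (Fin d) ℝ :=
  (matSqrt S1)⁻¹ * matSqrt (matSqrt S1 * S2 * matSqrt S1) * (matSqrt S1)⁻¹

open Classical in
/-- The Gaussian measure `N(m, Σ)` on `ℝ^d`, realized as the pushforward of a product of
standard real Gaussians under `x ↦ m + Σ^{1/2} x` (junk value `0` if `Σ` is not psd). -/
noncomputable def gaussianMeasure {d : ℕ} (m : Fin d → ℝ) (S : Matrix (Fin d) (Fin d) ℝ) :
    Measure (Fin d → ℝ) :=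
  if _h : S.PosSemidef then
    (Measure.pi fun _ : Fin d => gaussianReal 0 1).map (fun x => m + (matSqrt S).mulVec x)
  else 0

/-- Squared euclidean distance on `ℝ^d`. -/
def sqDist {d : ℕ} (x y : Fin d → ℝ) : ℝ := ∑ i, (x i - y i) ^ 2

/-- The 2-Wasserstein distance between two measures on `ℝ^d` (with the euclidean cost). -/
noncomputable def W2 {d : ℕ} (μ ν : Measure (Fin d → ℝ)) : ℝ :=
  Real.sqrt (⨅ π ∈ {π : Measure ((Fin d → ℝ) × (Fin d → ℝ)) |
      IsProbabilityMeasure π ∧ π.map Prod.fst = μ ∧ π.map Prod.snd = ν},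
    ∫⁻ p, ENNReal.ofReal (sqDist p.1 p.2) ∂π).toReal

/-- The inner product `⟨(a,V),(b,U)⟩_{(m*,Σ*)}` on `Ξ_d`. -/
noncomputable def xiInner {d : ℕ} (ms : Fin d → ℝ) (Ss : Matrix (Fin d) (Fin d) ℝ)
    (a : Fin d → ℝ) (V : Matrix (Fin d) (Fin d) ℝ)
    (b : Fin d → ℝ) (U : Matrix (Fin d) (Fin d) ℝ) : ℝ :=
  (a + V.mulVec ms) ⬝ᵥ (b + U.mulVec ms) + (V * Ss * U).trace

/-- The squared norm `‖(a,V)‖²_{(m*,Σ*)} = ‖a + V m*‖² + tr(V Σ* V)` on `Ξ_d`. -/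
noncomputable def xiNormSq {d : ℕ} (ms : Fin d → ℝ) (Ss : Matrix (Fin d) (Fin d) ℝ)
    (a : Fin d → ℝ) (V : Matrix (Fin d) (Fin d) ℝ) : ℝ :=
  (∑ i, (a i + V.mulVec ms i) ^ 2) + (V * Ss * V).trace

/-- The norm `‖(a,V)‖_{(m*,Σ*)}` on `Ξ_d`. -/
noncomputable def xiNorm {d : ℕ} (ms : Fin d → ℝ) (Ss : Matrix (Fin d) (Fin d) ℝ)
    (a : Fin d → ℝ) (V : Matrix (Fin d) (Fin d) ℝ) : ℝ :=
  Real.sqrt (xiNormSq ms Ss a V)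

open scoped MatrixOrder

/-!
Since `Σ*^{1/2}` commutes with `Σⱼ^{1/2}`, the product `Σ*^{1/2} Σⱼ^{1/2}` is positive
semidefinite and squares to `Σ*^{1/2} Σⱼ Σ*^{1/2}`, so it is the square root appearing in
`S(Σ*, Σⱼ)`; this gives `S(Σ*, Σⱼ) = Σⱼ^{1/2} Σ*^{-1/2}`. In the norm, the `V m*` term cancels
the `-S m*` part of the first component, and commutativity collapses
`tr(V Σ* V)` with `V = (Σ₁^{1/2} - Σ₂^{1/2}) Σ*^{-1/2}` to `tr((Σ₁^{1/2} - Σ₂^{1/2})²)`.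
-/

section

variable {d : ℕ}

lemma matSqrt_eq_cfcSqrt {A : Matrix (Fin d) (Fin d) ℝ} (h : A.PosSemidef) :
    matSqrt A = CFC.sqrt A := by
  rw [matSqrt, dif_pos h, CFC.sqrt_eq_cfc, cfc_nnreal_eq_real _ A h.nonneg, h.1.cfc_eq]
  simp only [IsHermitian.cfc, Unitary.conjStarAlgAut_apply]
  congr 3
  funext i
  simp [h.eigenvalues_nonneg i]

lemma matSqrt_nonneg {A : Matrix (Fin d) (Fin d) ℝ} (h : A.PosSemidef) : 0 ≤ matSqrt A := by
  rw [matSqrt_eq_cfcSqrt h]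
  exact CFC.sqrt_nonneg A

lemma matSqrt_mul_self {A : Matrix (Fin d) (Fin d) ℝ} (h : A.PosSemidef) :
    matSqrt A * matSqrt A = A := by
  rw [matSqrt_eq_cfcSqrt h]
  exact CFC.sqrt_mul_sqrt_self A h.nonneg

lemma matSqrt_sq {X : Matrix (Fin d) (Fin d) ℝ} (hX : 0 ≤ X) : matSqrt (X ^ 2) = X := by
  rw [matSqrt_eq_cfcSqrt ((nonneg_iff_posSemidef.mp hX).pow 2), CFC.sqrt_sq X hX]

lemma isUnit_matSqrt {A : Matrix (Fin d) (Fin d) ℝ} (h : A.PosDef) : IsUnit (matSqrt A) :=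
  isUnit_of_mul_isUnit_left (matSqrt_mul_self h.posSemidef ▸ h.isUnit)

lemma Smat_eq_of_commute {Ss S : Matrix (Fin d) (Fin d) ℝ} (hSs : Ss.PosDef) (hS : S.PosSemidef)
    (hc : Commute (matSqrt Ss) (matSqrt S)) :
    Smat Ss S = matSqrt S * (matSqrt Ss)⁻¹ := by
  have : Invertible (matSqrt Ss) := (isUnit_matSqrt hSs).invertible
  have hsq : matSqrt Ss * S * matSqrt Ss = (matSqrt Ss * matSqrt S) ^ 2 := by
    calc matSqrt Ss * S * matSqrt Ss = matSqrt Ss * matSqrt S * (matSqrt S * matSqrt Ss) := by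
          conv_lhs => rw [← matSqrt_mul_self hS]
          simp only [Matrix.mul_assoc]
      _ = (matSqrt Ss * matSqrt S) ^ 2 := by rw [← hc.eq, sq]
  have hAB : 0 ≤ matSqrt Ss * matSqrt S :=
    hc.mul_nonneg (matSqrt_nonneg hSs.posSemidef) (matSqrt_nonneg hS)
  rw [Smat, hsq, matSqrt_sq hAB, inv_mul_cancel_left_of_invertible]

lemma xiNormSq_sub_mulVec (ms a : Fin d → ℝ) (Ss V : Matrix (Fin d) (Fin d) ℝ) :
    xiNormSq ms Ss (a - V *ᵥ ms) V = ∑ i, a i ^ 2 + (V * Ss * V).trace := by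
  simp [xiNormSq]

lemma mul_inv_mul_mul_mul_inv_of_commute {A C S : Matrix (Fin d) (Fin d) ℝ} [Invertible A]
    (hc : Commute A C) (hS : A * A = S) : C * A⁻¹ * S * (C * A⁻¹) = C * C := by
  calc C * A⁻¹ * S * (C * A⁻¹) = C * (A⁻¹ * (A * (A * C))) * A⁻¹ := by
        simp only [← hS, Matrix.mul_assoc]
    _ = C * C * A * A⁻¹ := by
        rw [inv_mul_cancel_left_of_invertible, hc.eq, ← Matrix.mul_assoc]
    _ = C * C := mul_inv_cancel_right_of_invertible A _

end

/-- If `Σ*` is symmetric positive definite, `Σ₁, Σ₂` symmetric positive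
semidefinite, and `Σ*^{1/2}` commutes with `Σ₁^{1/2}` and `Σ₂^{1/2}`, then
`S(Σ*,Σⱼ) = Σⱼ^{1/2}Σ*^{-1/2}`, hence
`φ_{μ*}(N(mⱼ,Σⱼ)) = (mⱼ − Σⱼ^{1/2}Σ*^{-1/2}m*, Σⱼ^{1/2}Σ*^{-1/2} − I)`, and moreover
`‖φ_{μ*}(N(m₁,Σ₁)) − φ_{μ*}(N(m₂,Σ₂))‖²_{(m*,Σ*)} = ‖m₁−m₂‖² + tr((Σ₁^{1/2}−Σ₂^{1/2})²)`. -/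
theorem stmt_4 {d : ℕ} (ms m1 m2 : Fin d → ℝ) (Ss S1 S2 : Matrix (Fin d) (Fin d) ℝ)
    (hSs : Ss.PosDef) (h1 : S1.PosSemidef) (h2 : S2.PosSemidef)
    (hc1 : matSqrt Ss * matSqrt S1 = matSqrt S1 * matSqrt Ss)
    (hc2 : matSqrt Ss * matSqrt S2 = matSqrt S2 * matSqrt Ss) :
    Smat Ss S1 = matSqrt S1 * (matSqrt Ss)⁻¹ ∧
    Smat Ss S2 = matSqrt S2 * (matSqrt Ss)⁻¹ ∧
    (m1 - (Smat Ss S1).mulVec ms, Smat Ss S1 - 1)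
      = (m1 - (matSqrt S1 * (matSqrt Ss)⁻¹).mulVec ms, matSqrt S1 * (matSqrt Ss)⁻¹ - 1) ∧
    (m2 - (Smat Ss S2).mulVec ms, Smat Ss S2 - 1)
      = (m2 - (matSqrt S2 * (matSqrt Ss)⁻¹).mulVec ms, matSqrt S2 * (matSqrt Ss)⁻¹ - 1) ∧
    xiNormSq ms Ss
        ((m1 - (Smat Ss S1).mulVec ms) - (m2 - (Smat Ss S2).mulVec ms))
        ((Smat Ss S1 - 1) - (Smat Ss S2 - 1))
      = (∑ i, (m1 i - m2 i) ^ 2)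
        + ((matSqrt S1 - matSqrt S2) * (matSqrt S1 - matSqrt S2)).trace := by
  have e1 := Smat_eq_of_commute hSs h1 hc1
  have e2 := Smat_eq_of_commute hSs h2 hc2
  refine ⟨e1, e2, by rw [e1], by rw [e2], ?_⟩
  have : Invertible (matSqrt Ss) := (isUnit_matSqrt hSs).invertible
  have hV : (Smat Ss S1 - 1) - (Smat Ss S2 - 1) = (matSqrt S1 - matSqrt S2) * (matSqrt Ss)⁻¹ := by
    rw [e1, e2, Matrix.sub_mul]
    abel
  have ha : (m1 - (Smat Ss S1).mulVec ms) - (m2 - (Smat Ss S2).mulVec ms)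
      = (m1 - m2) - ((matSqrt S1 - matSqrt S2) * (matSqrt Ss)⁻¹).mulVec ms := by
    rw [← hV, sub_mulVec, sub_mulVec, sub_mulVec]
    abel
  have hc : Commute (matSqrt Ss) (matSqrt S1 - matSqrt S2) := Commute.sub_right hc1 hc2
  rw [ha, hV, xiNormSq_sub_mulVec,
    mul_inv_mul_mul_mul_inv_of_commute hc (matSqrt_mul_self hSs.posSemidef)]
  rfl
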